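/- arXiv:2503.05083 — 2 statements merged into one kernel-verified Lean document; each statement's English description precedes it below -/
import Mathlib

section
/- Let B ∈ R^{n×m}, K ∈ R^{m×n}, P_d an n×n positive definite diagonal matrix, and ω, μ, δ > 0 with ωμ > δ². Suppose KᵀBᵀP_d + P_d B K + ω·I_n + μ·P_d² ≺ 0 (negative definite). Then for every vector s ∈ R^n with ‖s‖² ≥ 1 and every f ∈ R^n with ‖f‖ ≤ δ, we have sᵀP_d(BKs + f) ≤ -(1/2)(ω - δ²/μ) < 0. -/
/-!
Evaluating the negative definite form at `s` gives
`2 ⟨P s, B K s⟩ + ω ‖s‖² + μ ‖P s‖² < 0`, and Young's inequality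
`⟨P s, f⟩ ≤ μ/2 ‖P s‖² + ‖f‖²/(2μ)` absorbs the disturbance into the `μ P²` term,
leaving `sᵀ P (B K s + f) < -ω/2 ‖s‖² + δ²/(2μ) ≤ -(ω - δ²/μ)/2`.
-/

open Matrix

variable {ι : Type*} [Fintype ι]

theorem dotProduct_le_young (x f : ι → ℝ) {μ : ℝ} (hμ : 0 < μ) :
    x ⬝ᵥ f ≤ μ / 2 * (x ⬝ᵥ x) + (f ⬝ᵥ f) / (2 * μ) := by
  have h : 0 ≤ (μ • x - f) ⬝ᵥ (μ • x - f) := by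
    simpa using dotProduct_star_self_nonneg (μ • x - f)
  simp only [sub_dotProduct, dotProduct_sub, smul_dotProduct, dotProduct_smul, smul_eq_mul,
    dotProduct_comm f x] at h
  have hsplit :
      μ / 2 * (x ⬝ᵥ x) + (f ⬝ᵥ f) / (2 * μ) = (μ ^ 2 * (x ⬝ᵥ x) + f ⬝ᵥ f) / (2 * μ) := by
    field_simp
  rw [hsplit, le_div_iff₀ (by positivity)]
  linarith

theorem dotProduct_mulVec_of_isSymm {P : Matrix ι ι ℝ} (hP : P.IsSymm)
    (s v : ι → ℝ) : s ⬝ᵥ P *ᵥ v = P *ᵥ s ⬝ᵥ v := by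
  rw [dotProduct_mulVec, ← mulVec_transpose, hP.eq]

theorem dotProduct_transpose_mul_add_mul_mulVec {P A : Matrix ι ι ℝ} (hP : P.IsSymm)
    (s : ι → ℝ) :
    s ⬝ᵥ (Aᵀ * P + P * A) *ᵥ s = 2 * (P *ᵥ s ⬝ᵥ A *ᵥ s) := by
  rw [add_mulVec, dotProduct_add, ← mulVec_mulVec, ← mulVec_mulVec, dotProduct_mulVec,
    vecMul_transpose, dotProduct_comm, dotProduct_mulVec_of_isSymm hP]
  ring

theorem dotProduct_mul_self_mulVec {P : Matrix ι ι ℝ} (hP : P.IsSymm) (s : ι → ℝ) :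
    s ⬝ᵥ (P * P) *ᵥ s = P *ᵥ s ⬝ᵥ P *ᵥ s := by
  rw [← mulVec_mulVec, dotProduct_mulVec_of_isSymm hP]

theorem dotProduct_mulVec_add_lt_of_dotProduct_mulVec_neg [DecidableEq ι] {P A : Matrix ι ι ℝ}
    (hP : P.IsSymm) {ω μ : ℝ} (hμ : 0 < μ) {s : ι → ℝ}
    (hQ : s ⬝ᵥ (Aᵀ * P + P * A + ω • 1 + μ • (P * P)) *ᵥ s < 0) (f : ι → ℝ) :
    s ⬝ᵥ P *ᵥ (A *ᵥ s + f) < -(ω / 2) * (s ⬝ᵥ s) + (f ⬝ᵥ f) / (2 * μ) := by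
  rw [add_mulVec, add_mulVec, dotProduct_add, dotProduct_add,
    dotProduct_transpose_mul_add_mul_mulVec hP, smul_mulVec, smul_mulVec, one_mulVec,
    dotProduct_smul, dotProduct_smul, dotProduct_mul_self_mulVec hP, smul_eq_mul, smul_eq_mul] at hQ
  rw [mulVec_add, dotProduct_add, dotProduct_mulVec_of_isSymm hP,
    dotProduct_mulVec_of_isSymm hP]
  linarith [dotProduct_le_young (P *ᵥ s) f hμ]

theorem stmt_6_general (n m : ℕ) (B : Matrix (Fin n) (Fin m) ℝ) (K : Matrix (Fin m) (Fin n) ℝ)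
    (p : Fin n → ℝ) (ω μ δ : ℝ)
    (hω : 0 < ω) (hμ : 0 < μ) (hωμ : δ^2 < ω * μ)
    (Pd : Matrix (Fin n) (Fin n) ℝ) (hPd : Pd = Matrix.diagonal p)
    (hneg : ∀ x : Fin n → ℝ, x ≠ 0 →
      x ⬝ᵥ (Kᵀ * Bᵀ * Pd + Pd * B * K + ω • (1 : Matrix (Fin n) (Fin n) ℝ)
        + μ • (Pd * Pd)) *ᵥ x < 0) :
    ∀ s f : Fin n → ℝ, 1 ≤ s ⬝ᵥ s → Real.sqrt (f ⬝ᵥ f) ≤ δ →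
      s ⬝ᵥ Pd *ᵥ (B *ᵥ (K *ᵥ s) + f) ≤ -(1/2) * (ω - δ^2 / μ) ∧
        -(1/2) * (ω - δ^2 / μ) < 0 := by
  intro s f hs hf
  have hPd_symm : Pd.IsSymm := hPd ▸ isSymm_diagonal p
  have hs0 : s ≠ 0 := by rintro rfl; norm_num at hs
  have hQ := hneg s hs0
  rw [← transpose_mul, Matrix.mul_assoc Pd] at hQ
  have hlt := dotProduct_mulVec_add_lt_of_dotProduct_mulVec_neg hPd_symm hμ hQ f
  rw [← mulVec_mulVec] at hlt
  have hff : f ⬝ᵥ f ≤ δ ^ 2 := (Real.sqrt_le_iff.mp hf).2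
  have hδμ : δ ^ 2 / μ < ω := (div_lt_iff₀ hμ).mpr hωμ
  have hdiv : (f ⬝ᵥ f) / (2 * μ) ≤ δ ^ 2 / μ / 2 := by
    rw [div_div, mul_comm μ]; gcongr
  have hωs : ω ≤ ω * (s ⬝ᵥ s) := le_mul_of_one_le_right hω.le hs
  constructor <;> linarith

/-- Core inequality of Theorem 1 (VSC): negative definiteness of
    `Kᵀ Bᵀ P_d + P_d B K + ω I + μ P_d²` forces
    `sᵀ P_d (B K s + f) ≤ -(ω - δ²/μ)/2 < 0` for every `s` with `‖s‖² ≥ 1`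
    and every disturbance `f` with `‖f‖ ≤ δ`. -/
theorem stmt_6 (n m : ℕ) (B : Matrix (Fin n) (Fin m) ℝ) (K : Matrix (Fin m) (Fin n) ℝ)
    (p : Fin n → ℝ) (hp : ∀ j, 0 < p j) (ω μ δ : ℝ)
    (hω : 0 < ω) (hμ : 0 < μ) (hδ : 0 < δ) (hωμ : δ^2 < ω * μ)
    (Pd : Matrix (Fin n) (Fin n) ℝ) (hPd : Pd = Matrix.diagonal p)
    (hneg : ∀ x : Fin n → ℝ, x ≠ 0 →
      x ⬝ᵥ (Kᵀ * Bᵀ * Pd + Pd * B * K + ω • (1 : Matrix (Fin n) (Fin n) ℝ)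
        + μ • (Pd * Pd)) *ᵥ x < 0) :
    ∀ s f : Fin n → ℝ, 1 ≤ s ⬝ᵥ s → Real.sqrt (f ⬝ᵥ f) ≤ δ →
      s ⬝ᵥ Pd *ᵥ (B *ᵥ (K *ᵥ s) + f) ≤ -(1/2) * (ω - δ^2 / μ) ∧
        -(1/2) * (ω - δ^2 / μ) < 0 :=
  stmt_6_general n m B K p ω μ δ hω hμ hωμ Pd hPd hneg
end

section
/- Let P, W be n×n symmetric matrices with P ≻ 0, W ≻ 0, B ∈ R^{n×m}, K ∈ R^{m×n}, μ > 0, δ ≥ 0. Suppose KᵀBᵀP + PBK + μ⁻¹δ²·I_n + μ·P² + W ≺ 0. Then for every σ ≠ 0 in R^n and every f ∈ R^n with ‖f‖ ≤ δ, 2σᵀP(BKσ/‖σ‖ + f) < -(1/‖σ‖)·σᵀWσ < 0. -/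
/-!
Write `s = ‖σ‖` and `p = Pσ`. By symmetry of `P`, the quadratic form of the matrix inequality at
`σ` reads `2 σᵀPBKσ + μ⁻¹δ² s² + μ ‖p‖² + σᵀWσ < 0`. The disturbance term is absorbed by
Cauchy–Schwarz and Young's inequality, `2 s pᵀf ≤ 2 ‖p‖ (δ s) ≤ μ ‖p‖² + μ⁻¹ δ² s²`, so
`2 s σᵀP(BKσ/s + f) < -σᵀWσ`; dividing by `s > 0` gives the estimate, and `W ≻ 0` its sign.
-/

open Matrix

section QuadraticForm

variable {ι R : Type*} [Fintype ι] [CommRing R] {P : Matrix ι ι R}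

lemma dotProduct_transpose_mul_mulVec_self (hP : P.IsSymm) (A : Matrix ι ι R) (x : ι → R) :
    x ⬝ᵥ (Aᵀ * P) *ᵥ x = x ⬝ᵥ (P * A) *ᵥ x := by
  rw [← hP.eq, ← transpose_mul, dotProduct_transpose_mulVec, hP.eq]

lemma dotProduct_mul_self_mulVec_self (hP : P.IsSymm) (x : ι → R) :
    x ⬝ᵥ (P * P) *ᵥ x = P *ᵥ x ⬝ᵥ P *ᵥ x := by
  rw [← mulVec_mulVec, dotProduct_mulVec, ← mulVec_transpose, hP.eq]

lemma dotProduct_riccati_mulVec_self [DecidableEq ι] (hP : P.IsSymm) (A W : Matrix ι ι R) (c μ : R)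
    (x : ι → R) :
    x ⬝ᵥ (Aᵀ * P + P * A + c • (1 : Matrix ι ι R) + μ • (P * P) + W) *ᵥ x =
      2 * (x ⬝ᵥ P *ᵥ A *ᵥ x) + c * (x ⬝ᵥ x) + μ * (P *ᵥ x ⬝ᵥ P *ᵥ x) + x ⬝ᵥ W *ᵥ x := by
  simp only [add_mulVec, dotProduct_add, smul_mulVec, one_mulVec, dotProduct_smul, smul_eq_mul,
    dotProduct_transpose_mul_mulVec_self hP, dotProduct_mul_self_mulVec_self hP, mulVec_mulVec]
  ring

end QuadraticForm

section Real

variable {ι : Type*} [Fintype ι]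

lemma dotProduct_self_nonneg {R : Type*} [Ring R] [LinearOrder R] [IsStrictOrderedRing R]
    (v : ι → R) : 0 ≤ v ⬝ᵥ v :=
  Finset.sum_nonneg fun i _ => mul_self_nonneg (v i)

lemma dotProduct_self_pos {R : Type*} [Ring R] [LinearOrder R] [IsStrictOrderedRing R]
    {v : ι → R} : 0 < v ⬝ᵥ v ↔ v ≠ 0 :=
  (dotProduct_self_nonneg v).lt_iff_ne'.trans dotProduct_self_eq_zero.not

lemma dotProduct_le_sqrt_mul_sqrt (u v : ι → ℝ) :
    u ⬝ᵥ v ≤ √(u ⬝ᵥ u) * √(v ⬝ᵥ v) := by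
  simpa only [dotProduct, sq] using Real.sum_mul_le_sqrt_mul_sqrt Finset.univ u v

lemma two_mul_mul_dotProduct_le {p f : ι → ℝ} {s δ μ : ℝ} (hs : 0 ≤ s) (hμ : 0 < μ)
    (hf : √(f ⬝ᵥ f) ≤ δ) :
    2 * s * (p ⬝ᵥ f) ≤ μ * (p ⬝ᵥ p) + μ⁻¹ * δ ^ 2 * s ^ 2 := by
  have hp : √(p ⬝ᵥ p) ^ 2 = p ⬝ᵥ p := Real.sq_sqrt (dotProduct_self_nonneg p)
  calc 2 * s * (p ⬝ᵥ f) ≤ 2 * s * (√(p ⬝ᵥ p) * δ) := by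
        gcongr
        exact (dotProduct_le_sqrt_mul_sqrt p f).trans (by gcongr)
    _ = 2 * √(p ⬝ᵥ p) * (δ * s) := by ring
    _ ≤ μ * √(p ⬝ᵥ p) ^ 2 + μ⁻¹ * (δ * s) ^ 2 := two_mul_le_add_mul_sq hμ
    _ = μ * (p ⬝ᵥ p) + μ⁻¹ * δ ^ 2 * s ^ 2 := by rw [hp]; ring

end Real

theorem stmt_7_general (n m : ℕ) (P W : Matrix (Fin n) (Fin n) ℝ)
    (hP : P.PosDef) (hW : W.PosDef)
    (B : Matrix (Fin n) (Fin m) ℝ) (K : Matrix (Fin m) (Fin n) ℝ)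
    (μ δ : ℝ) (hμ : 0 < μ)
    (hneg : ∀ x : Fin n → ℝ, x ≠ 0 →
      x ⬝ᵥ (Kᵀ * Bᵀ * P + P * B * K + (μ⁻¹ * δ^2) • (1 : Matrix (Fin n) (Fin n) ℝ)
        + μ • (P * P) + W) *ᵥ x < 0) :
    ∀ σ f : Fin n → ℝ, σ ≠ 0 → Real.sqrt (f ⬝ᵥ f) ≤ δ →
      2 * (σ ⬝ᵥ P *ᵥ ((Real.sqrt (σ ⬝ᵥ σ))⁻¹ • ((B * K) *ᵥ σ) + f))
          < -(Real.sqrt (σ ⬝ᵥ σ))⁻¹ * (σ ⬝ᵥ W *ᵥ σ) ∧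
        -(Real.sqrt (σ ⬝ᵥ σ))⁻¹ * (σ ⬝ᵥ W *ᵥ σ) < 0 := by
  intro σ f hσ hf
  set s := √(σ ⬝ᵥ σ)
  have hs : 0 < s := Real.sqrt_pos.mpr (dotProduct_self_pos.mpr hσ)
  have hs2 : s ^ 2 = σ ⬝ᵥ σ := Real.sq_sqrt (dotProduct_self_nonneg σ)
  have hPsymm : P.IsSymm := hP.isHermitian
  have hσW : 0 < σ ⬝ᵥ W *ᵥ σ := by simpa using hW.dotProduct_mulVec_pos hσ
  have hquad := hneg σ hσ
  rw [← transpose_mul, Matrix.mul_assoc, dotProduct_riccati_mulVec_self hPsymm] at hquad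
  have hyoung := two_mul_mul_dotProduct_le (p := P *ᵥ σ) hs.le hμ hf
  have hflow : σ ⬝ᵥ P *ᵥ (s⁻¹ • ((B * K) *ᵥ σ) + f) =
      s⁻¹ * (σ ⬝ᵥ P *ᵥ (B * K) *ᵥ σ + s * (P *ᵥ σ ⬝ᵥ f)) := by
    rw [mulVec_add, dotProduct_add, mulVec_smul, dotProduct_smul, smul_eq_mul,
      dotProduct_mulVec σ P f, ← mulVec_transpose, hPsymm.eq, dotProduct_comm _ f]
    field_simp
  rw [← hs2] at hquad
  refine ⟨?_, by linarith [mul_pos (inv_pos.mpr hs) hσW]⟩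
  rw [hflow, neg_mul, ← mul_neg, ← mul_assoc, mul_comm 2, mul_assoc]
  exact mul_lt_mul_of_pos_left (by linarith) (inv_pos.mpr hs)

/-- Core derivative estimate of Theorem 2 (UVC): if
    `Kᵀ Bᵀ P + P B K + μ⁻¹ δ² I + μ P² + W ≺ 0` then, along `σ' = BKσ/‖σ‖ + f`
    with `‖f‖ ≤ δ`, the derivative of `σᵀ P σ` satisfies
    `2 σᵀ P (BKσ/‖σ‖ + f) < -(1/‖σ‖) σᵀ W σ < 0`, for every `σ ≠ 0`. -/
theorem stmt_7 (n m : ℕ) (P W : Matrix (Fin n) (Fin n) ℝ)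
    (hP : P.PosDef) (hW : W.PosDef)
    (B : Matrix (Fin n) (Fin m) ℝ) (K : Matrix (Fin m) (Fin n) ℝ)
    (μ δ : ℝ) (hμ : 0 < μ) (hδ : 0 ≤ δ)
    (hneg : ∀ x : Fin n → ℝ, x ≠ 0 →
      x ⬝ᵥ (Kᵀ * Bᵀ * P + P * B * K + (μ⁻¹ * δ^2) • (1 : Matrix (Fin n) (Fin n) ℝ)
        + μ • (P * P) + W) *ᵥ x < 0) :
    ∀ σ f : Fin n → ℝ, σ ≠ 0 → Real.sqrt (f ⬝ᵥ f) ≤ δ →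
      2 * (σ ⬝ᵥ P *ᵥ ((Real.sqrt (σ ⬝ᵥ σ))⁻¹ • ((B * K) *ᵥ σ) + f))
          < -(Real.sqrt (σ ⬝ᵥ σ))⁻¹ * (σ ⬝ᵥ W *ᵥ σ) ∧
        -(Real.sqrt (σ ⬝ᵥ σ))⁻¹ * (σ ⬝ᵥ W *ᵥ σ) < 0 :=
  stmt_7_general n m P W hP hW B K μ δ hμ hneg
end
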